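/- Let G, H be additive commutative groups, ψ : G →+ H a surjective group homomorphism with FINITE kernel, R a commutative ring with G-grading 𝒜, and M, N G-graded R-modules with gradings ℳ, 𝒩. Fix h ∈ H and let f : M →ₗ[R] N be homogeneous of degree h with respect to the ψ-coarsened gradings, i.e. f maps ⨆_{g ∈ ψ⁻¹(h')} ℳ g into ⨆_{k ∈ ψ⁻¹(h'+h)} 𝒩 k for every h' ∈ H. Then f lies in the (finite) sum, over g ∈ ψ⁻¹(h), of the submodules of Hom_R(M,N) consisting of the maps homogeneous of degree g (maps sending ℳ g' into 𝒩 (g'+g) for all g' ∈ G). -/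

import Mathlib

/-! The degree-`g` component of `f` sends `m ∈ ℳ g'` to the `(g' + g)`-component of `f m`; it is
`R`-linear because multiplying by a scalar of degree `a` shifts every component by `a`. For
`m ∈ ℳ g'`, coarsened homogeneity puts `f m` in the sum of the `𝒩 (g' + g)` over
`g ∈ ψ ⁻¹' {h}`, and this fibre is finite since `ker ψ` is, so `f` is the sum of its components
of degrees in `ψ ⁻¹' {h}`. -/

/-- Coarsening of a grading along a surjective group homomorphism `ψ`:
the component of degree `h` is the supremum of the components of the degrees
in the fibre `ψ ⁻¹' {h}`. -/
def AddSubgroup.coarsen {G H M : Type*} [AddCommGroup G] [AddCommGroup H]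
    [AddCommGroup M] (ψ : G →+ H) (ℳ : G → AddSubgroup M) (h : H) : AddSubgroup M :=
  ⨆ g ∈ ψ ⁻¹' {h}, ℳ g

/-- The additive subgroup of `Hom_R(M,N)` consisting of the `R`-linear maps that are
homogeneous of degree `g` with respect to the gradings `ℳ` and `𝒩`. -/
def homOfDegree {R M N G : Type*} [CommRing R] [AddCommGroup M] [Module R M]
    [AddCommGroup N] [Module R N] [AddCommGroup G]
    (ℳ : G → AddSubgroup M) (𝒩 : G → AddSubgroup N) (g : G) :
    AddSubgroup (M →ₗ[R] N) where
  carrier := {f | ∀ g' : G, ∀ x ∈ ℳ g', f x ∈ 𝒩 (g' + g)}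
  add_mem' := fun ha hb g' x hx => by
    simpa using add_mem (ha g' x hx) (hb g' x hx)
  zero_mem' := fun g' x hx => by simpa using zero_mem _
  neg_mem' := fun ha g' x hx => by simpa using neg_mem (ha g' x hx)

open DirectSum

theorem AddMonoidHom.finite_preimage_singleton {G H : Type*} [AddGroup G] [AddGroup H]
    (ψ : G →+ H) (hker : (ψ.ker : Set G).Finite) (c : H) : (ψ ⁻¹' {c}).Finite := by
  rcases (ψ ⁻¹' {c}).eq_empty_or_nonempty with hempty | ⟨g, rfl : ψ g = c⟩
  · simp [hempty]
  · have := hker.to_subtype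
    exact Set.finite_coe_iff.mp (Finite.of_equiv _ (ψ.fiberEquivKer g).symm)

theorem AddMonoidHom.preimage_singleton_map_add {G H : Type*} [AddGroup G] [AddGroup H]
    (ψ : G →+ H) (g : G) (h : H) : ψ ⁻¹' {ψ g + h} = (g + ·) '' (ψ ⁻¹' {h}) := by
  ext k
  simp [Set.image_add_left, neg_add_eq_iff_eq_add]

namespace AddSubgroup

variable {G H M : Type*} [AddCommGroup G] [AddCommGroup H] [AddCommGroup M]
  (ψ : G →+ H) (ℳ : G → AddSubgroup M)

theorem le_coarsen (g : G) : ℳ g ≤ coarsen ψ ℳ (ψ g) :=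
  le_biSup ℳ (show g ∈ ψ ⁻¹' {ψ g} from rfl)

theorem coarsen_map_add (g : G) (h : H) :
    coarsen ψ ℳ (ψ g + h) = ⨆ k ∈ ψ ⁻¹' {h}, ℳ (g + k) := by
  rw [coarsen, ψ.preimage_singleton_map_add, iSup_image]

end AddSubgroup

namespace DirectSum

variable {ι M : Type*} [DecidableEq ι] [AddCommGroup M] (ℳ : ι → AddSubgroup M) [Decomposition ℳ]

theorem sum_decompose_of_mem_biSup {κ : Type*} {e : κ → ι} (he : e.Injective) {s : Set κ}
    (hs : s.Finite) {x : M} (hx : x ∈ ⨆ j ∈ s, ℳ (e j)) :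
    ∑ j ∈ hs.toFinset, (decompose ℳ x (e j) : M) = x := by
  rw [iSup_subtype'] at hx
  induction hx using AddSubgroup.iSup_induction' with
  | hp j y hy =>
    rw [Finset.sum_eq_single_of_mem j.1 (hs.mem_toFinset.mpr j.2)
      fun k _ hkj => decompose_of_mem_ne ℳ hy (he.ne hkj).symm]
    exact decompose_of_mem_same ℳ hy
  | h1 => simp
  | hadd x y _ _ hx hy => simp only [decompose_add, add_apply, AddSubgroup.coe_add,
      Finset.sum_add_distrib, hx, hy]

theorem coe_decompose_smul_of_mem [AddLeftCancelMonoid ι] {R S : Type*} [SetLike S R]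
    [DistribSMul R M] (𝒜 : ι → S) [SetLike.GradedSMul 𝒜 ℳ] {i : ι} {r : R} (hr : r ∈ 𝒜 i)
    (m : M) (j : ι) : (decompose ℳ (r • m) (i + j) : M) = r • decompose ℳ m j := by
  induction m using Decomposition.inductionOn ℳ with
  | zero => simp
  | @homogeneous k m =>
    have hrm : r • (m : M) ∈ ℳ (i + k) := SetLike.GradedSMul.smul_mem hr m.2
    by_cases hkj : k = j
    · subst hkj
      rw [decompose_of_mem_same ℳ hrm, decompose_of_mem_same ℳ m.2]
    · rw [decompose_of_mem_ne ℳ hrm (fun e => hkj (add_left_cancel e)),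
        decompose_of_mem_ne ℳ m.2 hkj, smul_zero]
  | add m m' hm hm' =>
    simp only [smul_add, decompose_add, add_apply, AddSubgroup.coe_add, hm, hm']

end DirectSum

namespace AddMonoidHom

variable {G M N : Type*} [AddCommGroup G] [DecidableEq G] [AddCommGroup M] [AddCommGroup N]
  (ℳ : G → AddSubgroup M) (𝒩 : G → AddSubgroup N) [Decomposition ℳ] [Decomposition 𝒩]

def homogeneousComponent (f : M →+ N) (g : G) : M →+ N :=
  (toAddMonoid fun g' => AddMonoidHom.mk' (fun x : ℳ g' => (decompose 𝒩 (f x) (g' + g) : N))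
    (by simp)).comp (decomposeAddEquiv ℳ).toAddMonoidHom

theorem homogeneousComponent_apply_of_mem (f : M →+ N) (g : G) {g' : G} {m : M}
    (hm : m ∈ ℳ g') : homogeneousComponent ℳ 𝒩 f g m = decompose 𝒩 (f m) (g' + g) := by
  simp [homogeneousComponent, decompose_of_mem ℳ hm]

end AddMonoidHom

namespace LinearMap

variable {G R M N : Type*} [AddCommGroup G] [DecidableEq G] [CommRing R]
  [AddCommGroup M] [Module R M] [AddCommGroup N] [Module R N]

theorem homogeneousComponent_map_smul (𝒜 : G → AddSubgroup R) (ℳ : G → AddSubgroup M)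
    (𝒩 : G → AddSubgroup N) [Decomposition 𝒜] [Decomposition ℳ] [Decomposition 𝒩]
    [SetLike.GradedSMul 𝒜 ℳ] [SetLike.GradedSMul 𝒜 𝒩] (f : M →ₗ[R] N) (g : G) (r : R) (m : M) :
    f.toAddMonoidHom.homogeneousComponent ℳ 𝒩 g (r • m) =
      r • f.toAddMonoidHom.homogeneousComponent ℳ 𝒩 g m := by
  induction r using Decomposition.inductionOn 𝒜 generalizing m with
  | zero => simp
  | @homogeneous _ r =>
    induction m using Decomposition.inductionOn ℳ with
    | zero => simp
    | @homogeneous g' m =>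
      rw [AddMonoidHom.homogeneousComponent_apply_of_mem ℳ 𝒩 _ g m.2,
        AddMonoidHom.homogeneousComponent_apply_of_mem ℳ 𝒩 _ g
          (SetLike.GradedSMul.smul_mem (A := 𝒜) r.2 m.2),
        toAddMonoidHom_coe, map_smul, vadd_eq_add, add_assoc,
        coe_decompose_smul_of_mem 𝒩 𝒜 r.2]
    | add m m' hm hm' => simp only [smul_add, map_add, hm, hm']
  | add r r' hr hr' => simp only [add_smul, map_add, hr, hr']

variable (𝒜 : G → AddSubgroup R) (ℳ : G → AddSubgroup M) (𝒩 : G → AddSubgroup N)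
  [Decomposition 𝒜] [Decomposition ℳ] [Decomposition 𝒩]
  [SetLike.GradedSMul 𝒜 ℳ] [SetLike.GradedSMul 𝒜 𝒩]

def homogeneousComponent (f : M →ₗ[R] N) (g : G) : M →ₗ[R] N where
  __ := f.toAddMonoidHom.homogeneousComponent ℳ 𝒩 g
  map_smul' := homogeneousComponent_map_smul 𝒜 ℳ 𝒩 f g

theorem homogeneousComponent_apply_of_mem (f : M →ₗ[R] N) (g : G) {g' : G} {m : M}
    (hm : m ∈ ℳ g') : f.homogeneousComponent 𝒜 ℳ 𝒩 g m = decompose 𝒩 (f m) (g' + g) :=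
  AddMonoidHom.homogeneousComponent_apply_of_mem ℳ 𝒩 _ g hm

theorem homogeneousComponent_mem_homOfDegree (f : M →ₗ[R] N) (g : G) :
    f.homogeneousComponent 𝒜 ℳ 𝒩 g ∈ homOfDegree ℳ 𝒩 g := fun g' m hm => by
  rw [homogeneousComponent_apply_of_mem 𝒜 ℳ 𝒩 f g hm]
  exact SetLike.coe_mem _

theorem sum_homogeneousComponent (f : M →ₗ[R] N) {s : Set G} (hs : s.Finite)
    (hf : ∀ g', ∀ m ∈ ℳ g', f m ∈ ⨆ g ∈ s, 𝒩 (g' + g)) :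
    ∑ g ∈ hs.toFinset, f.homogeneousComponent 𝒜 ℳ 𝒩 g = f := by
  ext m
  induction m using Decomposition.inductionOn ℳ with
  | zero => simp
  | @homogeneous g' m =>
    simp only [coe_sum, Finset.sum_apply, homogeneousComponent_apply_of_mem 𝒜 ℳ 𝒩 f _ m.2]
    exact sum_decompose_of_mem_biSup 𝒩 (add_right_injective g') hs (hf g' m m.2)
  | add m m' hm hm' => simp only [map_add, hm, hm']

end LinearMap

theorem coarsened_homogeneous_mem_sum_general {G H R M N : Type*}
    [AddCommGroup G] [AddCommGroup H] [DecidableEq G] [CommRing R]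
    [AddCommGroup M] [Module R M] [AddCommGroup N] [Module R N]
    (ψ : G →+ H) (hker : (ψ.ker : Set G).Finite)
    (𝒜 : G → AddSubgroup R) [GradedRing 𝒜]
    (ℳ : G → AddSubgroup M) (𝒩 : G → AddSubgroup N)
    (hM : DirectSum.IsInternal ℳ)
    (hMsmul : ∀ g g' : G, ∀ r ∈ 𝒜 g, ∀ m ∈ ℳ g', r • m ∈ ℳ (g + g'))
    (hN : DirectSum.IsInternal 𝒩)
    (hNsmul : ∀ g g' : G, ∀ r ∈ 𝒜 g, ∀ n ∈ 𝒩 g', r • n ∈ 𝒩 (g + g'))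
    (h : H) (f : M →ₗ[R] N)
    (hf : f ∈ homOfDegree (AddSubgroup.coarsen ψ ℳ) (AddSubgroup.coarsen ψ 𝒩) h) :
    f ∈ ⨆ g ∈ ψ ⁻¹' {h}, homOfDegree (R := R) ℳ 𝒩 g := by
  let := hM.chooseDecomposition
  let := hN.chooseDecomposition
  have : SetLike.GradedSMul 𝒜 ℳ := ⟨fun _ _ _ _ hr hm => hMsmul _ _ _ hr _ hm⟩
  have : SetLike.GradedSMul 𝒜 𝒩 := ⟨fun _ _ _ _ hr hn => hNsmul _ _ _ hr _ hn⟩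
  have hfibre := ψ.finite_preimage_singleton hker h
  have hf_fibre (g' : G) (m : M) (hm : m ∈ ℳ g') : f m ∈ ⨆ g ∈ ψ ⁻¹' {h}, 𝒩 (g' + g) := by
    rw [← AddSubgroup.coarsen_map_add]
    exact hf _ _ (AddSubgroup.le_coarsen ψ ℳ g' hm)
  rw [← f.sum_homogeneousComponent 𝒜 ℳ 𝒩 hfibre hf_fibre]
  exact sum_mem fun g hg => le_biSup (homOfDegree (R := R) ℳ 𝒩)
    (hfibre.mem_toFinset.mp hg) (f.homogeneousComponent_mem_homOfDegree 𝒜 ℳ 𝒩 g)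

/-- If `ψ : G →+ H` is surjective with finite kernel and `f : M →ₗ[R] N` is homogeneous of
degree `h` with respect to the `ψ`-coarsened gradings, then `f` lies in the sum, over
`g ∈ ψ ⁻¹' {h}`, of the subgroups of maps homogeneous of degree `g`. -/
theorem coarsened_homogeneous_mem_sum {G H R M N : Type*}
    [AddCommGroup G] [AddCommGroup H] [DecidableEq G] [DecidableEq H] [CommRing R]
    [AddCommGroup M] [Module R M] [AddCommGroup N] [Module R N]
    (ψ : G →+ H) (hψ : Function.Surjective ψ) (hker : (ψ.ker : Set G).Finite)
    (𝒜 : G → AddSubgroup R) [GradedRing 𝒜]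
    (ℳ : G → AddSubgroup M) (𝒩 : G → AddSubgroup N)
    (hM : DirectSum.IsInternal ℳ)
    (hMsmul : ∀ g g' : G, ∀ r ∈ 𝒜 g, ∀ m ∈ ℳ g', r • m ∈ ℳ (g + g'))
    (hN : DirectSum.IsInternal 𝒩)
    (hNsmul : ∀ g g' : G, ∀ r ∈ 𝒜 g, ∀ n ∈ 𝒩 g', r • n ∈ 𝒩 (g + g'))
    (h : H) (f : M →ₗ[R] N)
    (hf : f ∈ homOfDegree (AddSubgroup.coarsen ψ ℳ) (AddSubgroup.coarsen ψ 𝒩) h) :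
    f ∈ ⨆ g ∈ ψ ⁻¹' {h}, homOfDegree (R := R) ℳ 𝒩 g :=
  coarsened_homogeneous_mem_sum_general ψ hker 𝒜 ℳ 𝒩 hM hMsmul hN hNsmul h f hf
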